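/- Let w ∈ W be commutative (in the simply-laced case, equivalently: (γ, γ′) ≥ 0 for all γ, γ′ ∈ N(w)) and let w′ be a left factor of w (i.e., w = w′w″ with ℓ(w) = ℓ(w′) + ℓ(w″)). Then for every γ′ ∈ N(w′) there exists γ ∈ N(w) with γ′ ≼ γ. -/

import Mathlib

open scoped RealInnerProductSpace

/-- Data of a crystallographic root system in a real inner product space `V`,
with simple roots indexed by a finite type `ι`. -/
structure RSD (ι V : Type*) [Fintype ι] [NormedAddCommGroup V]
    [InnerProductSpace ℝ V] where
  /-- The simple roots. -/
  sroot : ι → V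
  /-- The set of roots. -/
  Δ : Set V
  finite : Δ.Finite
  zero_not_mem : (0 : V) ∉ Δ
  sroot_mem : ∀ i, sroot i ∈ Δ
  sroot_indep : LinearIndependent ℝ sroot
  neg_mem : ∀ a ∈ Δ, -a ∈ Δ
  /-- Crystallographic condition. -/
  crys : ∀ a ∈ Δ, ∀ b ∈ Δ, ∃ n : ℤ, 2 * ⟪a, b⟫ / ⟪a, a⟫ = (n : ℝ)
  /-- The reflection associated with a vector (only specified on roots). -/
  reflect : V → (V ≃ₗ[ℝ] V)
  reflect_apply : ∀ a ∈ Δ, ∀ v : V,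
    reflect a v = v - (2 * ⟪a, v⟫ / ⟪a, a⟫) • a
  reflect_root_mem : ∀ a ∈ Δ, ∀ b ∈ Δ, reflect a b ∈ Δ
  /-- Every root is a nonnegative or nonpositive integral combination of simple roots. -/
  decomp : ∀ a ∈ Δ, (∃ c : ι → ℕ, a = ∑ i, (c i : ℝ) • sroot i) ∨
      (∃ c : ι → ℕ, a = -∑ i, (c i : ℝ) • sroot i)
  /-- Irreducibility. -/
  irred : ∀ S T : Set V, S ∪ T = Δ → (∀ a ∈ S, ∀ b ∈ T, ⟪a, b⟫ = 0) →
      S = ∅ ∨ T = ∅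

namespace RSD

variable {ι V : Type*} [Fintype ι] [NormedAddCommGroup V] [InnerProductSpace ℝ V]
  (R : RSD ι V)

/-- The set of positive roots. -/
def pos : Set V := {a ∈ R.Δ | ∃ c : ι → ℕ, a = ∑ i, (c i : ℝ) • R.sroot i}

/-- `R.le μ γ` means `μ ≼ γ`, i.e. `γ - μ` is a nonnegative integral combination
of simple roots. -/
def le (μ γ : V) : Prop := ∃ c : ι → ℕ, γ - μ = ∑ i, (c i : ℝ) • R.sroot i

/-- The Weyl group, generated by the simple reflections. -/
def W : Subgroup (V ≃ₗ[ℝ] V) :=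
  Subgroup.closure (Set.range fun i => R.reflect (R.sroot i))

/-- The inversion set `N(w) = {γ ∈ Δ⁺ ∣ w γ ∈ -Δ⁺}`. -/
def N (w : V ≃ₗ[ℝ] V) : Set V := {γ ∈ R.pos | -(w γ) ∈ R.pos}

/-- The length of `w`: minimal length of an expression of `w` as a product of
simple reflections. -/
noncomputable def len (w : V ≃ₗ[ℝ] V) : ℕ :=
  sInf {n | ∃ l : List ι, l.length = n ∧
    (l.map fun i => R.reflect (R.sroot i)).prod = w}

/-- The coroot `a∨ = 2a/(a,a)`. -/
@[nolint unusedArguments]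
noncomputable def coroot (_R : RSD ι V) (a : V) : V := (2 / ⟪a, a⟫) • a

/-- `ρ`, the half-sum of the positive roots. -/
noncomputable def rho : V :=
  (2⁻¹ : ℝ) • ∑ a ∈ (R.finite.subset (fun a ha => ha.1 : R.pos ⊆ R.Δ)).toFinset, a

/-- `R.HtIs γ n` : the height of `γ` is `n`. -/
def HtIs (γ : V) (n : ℕ) : Prop :=
  ∃ c : ι → ℕ, γ = ∑ i, (c i : ℝ) • R.sroot i ∧ ∑ i, c i = n

/-- A long root: a root of maximal squared length. -/
def IsLong (γ : V) : Prop := γ ∈ R.Δ ∧ ∀ b ∈ R.Δ, ⟪b, b⟫ ≤ ⟪γ, γ⟫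

/-- The highest root. -/
def IsHighest (θ : V) : Prop := θ ∈ R.pos ∧ ∀ γ ∈ R.pos, R.le γ θ

/-- Simply-laced: all roots have the same length. -/
def SimplyLaced : Prop := ∀ a ∈ R.Δ, ∀ b ∈ R.Δ, ⟪a, a⟫ = ⟪b, b⟫

/-- A minimal inversion complete set. -/
def IsMICS (F : Set (V ≃ₗ[ℝ] V)) : Prop :=
  (∀ w ∈ F, w ∈ R.W) ∧ (⋃ w ∈ F, R.N w) = R.pos ∧
    ∀ F' ⊂ F, (⋃ w ∈ F', R.N w) ≠ R.pos

end RSD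

/-!
Write `w = w' s_{j₁} ⋯ s_{jₘ}` with lengths adding up and induct on `m`. Since `ℓ(w' s_j) = ℓ(w') + 1`,
the exchange condition gives `w' α_j > 0`, so `s_j` maps `N(w')` into `N(w' s_j)`, which also contains
`α_j`. As lengths add, the inverse of the rest of the word carries `N(w' s_j)` isometrically into
`N(w)`, so `w' s_j` is commutative as well. Hence `-(γ', α_j) = (s_j γ', α_j) ≥ 0`, which gives
`γ' ≼ s_j γ' ∈ N(w' s_j)`, and we conclude by induction.
-/

namespace RSD

variable {ι V : Type*} [Fintype ι] [NormedAddCommGroup V] [InnerProductSpace ℝ V]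
  (R : RSD ι V)

def simpleReflection (i : ι) : V ≃ₗ[ℝ] V := R.reflect (R.sroot i)

def wordProd (l : List ι) : V ≃ₗ[ℝ] V := (l.map R.simpleReflection).prod

lemma inner_self_pos {a : V} (ha : a ∈ R.Δ) : 0 < ⟪a, a⟫ :=
  real_inner_self_pos.2 fun h => R.zero_not_mem (h ▸ ha)

lemma exists_int_reflect_eq {a b : V} (ha : a ∈ R.Δ) (hb : b ∈ R.Δ) :
    ∃ k : ℤ, R.reflect a b = b - (k : ℝ) • a ∧ 2 * ⟪a, b⟫ = k * ⟪a, a⟫ := by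
  obtain ⟨k, hk⟩ := R.crys a ha b hb
  refine ⟨k, by rw [R.reflect_apply a ha, hk], ?_⟩
  rw [← hk, div_mul_cancel₀ _ (R.inner_self_pos ha).ne']

lemma inner_reflect_reflect {a : V} (ha : a ∈ R.Δ) (u v : V) :
    ⟪R.reflect a u, R.reflect a v⟫ = ⟪u, v⟫ := by
  have h := (R.inner_self_pos ha).ne'
  rw [R.reflect_apply a ha u, R.reflect_apply a ha v]
  simp only [inner_sub_left, inner_sub_right, real_inner_smul_left, real_inner_smul_right,
    real_inner_comm a u]
  field_simp
  ring

lemma inner_reflect_self {a : V} (ha : a ∈ R.Δ) (v : V) :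
    ⟪R.reflect a v, a⟫ = -⟪v, a⟫ := by
  have h := (R.inner_self_pos ha).ne'
  rw [R.reflect_apply a ha, inner_sub_left, real_inner_smul_left, real_inner_comm a v]
  field_simp
  ring

lemma reflect_reflect {a : V} (ha : a ∈ R.Δ) (v : V) :
    R.reflect a (R.reflect a v) = v := by
  have h := (R.inner_self_pos ha).ne'
  rw [R.reflect_apply a ha v, R.reflect_apply a ha, inner_sub_right, real_inner_smul_right]
  field_simp
  module

lemma reflect_self {a : V} (ha : a ∈ R.Δ) : R.reflect a a = -a := by
  rw [R.reflect_apply a ha, mul_div_assoc, div_self (R.inner_self_pos ha).ne']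
  module

lemma mem_pos_or_neg_mem_pos {a : V} (ha : a ∈ R.Δ) : a ∈ R.pos ∨ -a ∈ R.pos := by
  rcases R.decomp a ha with ⟨c, hc⟩ | ⟨c, hc⟩
  · exact Or.inl ⟨ha, c, hc⟩
  · exact Or.inr ⟨R.neg_mem a ha, c, by rw [hc, neg_neg]⟩

lemma not_neg_mem_pos {a : V} (ha : a ∈ R.pos) : -a ∉ R.pos := by
  rintro ⟨-, d, hd⟩
  obtain ⟨haΔ, c, hc⟩ := ha
  have hcd : ∀ i, ((c i : ℝ) + d i) = 0 :=
    Fintype.linearIndependent_iffₛ.1 R.sroot_indep _ 0 <| by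
      simp only [add_smul, Finset.sum_add_distrib, ← hc, ← hd, add_neg_cancel, Pi.zero_apply,
        zero_smul, Finset.sum_const_zero]
  have hc0 : ∀ i, (c i : ℝ) = 0 := fun i => by
    linarith [hcd i, (c i).cast_nonneg (α := ℝ), (d i).cast_nonneg (α := ℝ)]
  refine R.zero_not_mem ?_
  simpa [hc, hc0] using haΔ

lemma sum_single_smul_sroot [DecidableEq ι] (i : ι) (n : ℕ) :
    ∑ j, ((Pi.single i n : ι → ℕ) j : ℝ) • R.sroot j = (n : ℝ) • R.sroot i := by
  rw [Fintype.sum_eq_single i fun j hj => by simp [hj], Pi.single_eq_same]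

lemma sroot_mem_pos (i : ι) : R.sroot i ∈ R.pos := by
  classical
  exact ⟨R.sroot_mem i, Pi.single i 1, by rw [R.sum_single_smul_sroot, Nat.cast_one, one_smul]⟩

lemma eq_sroot_of_eq_natCast_smul (hsl : R.SimplyLaced) {β : V} (hβ : β ∈ R.Δ) {i : ι}
    {n : ℕ} (h : β = (n : ℝ) • R.sroot i) : β = R.sroot i := by
  have hlen := hsl β hβ _ (R.sroot_mem i)
  rw [h, real_inner_smul_left, real_inner_smul_right] at hlen
  have hn : (n : ℝ) * n = 1 := by
    nlinarith [R.inner_self_pos (R.sroot_mem i)]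
  have hn1 : (n : ℝ) = 1 := by nlinarith [n.cast_nonneg (α := ℝ)]
  rw [h, hn1, one_smul]

lemma simpleReflection_mem_pos (hsl : R.SimplyLaced) {i : ι} {β : V} (hβ : β ∈ R.pos)
    (hne : β ≠ R.sroot i) : R.simpleReflection i β ∈ R.pos := by
  classical
  obtain ⟨hβΔ, c, hc⟩ := hβ
  obtain ⟨k, hk, -⟩ := R.exists_int_reflect_eq (R.sroot_mem i) hβΔ
  refine (R.mem_pos_or_neg_mem_pos (R.reflect_root_mem _ (R.sroot_mem i) β hβΔ)).resolve_right ?_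
  rintro ⟨-, d, hd⟩
  -- `β - s_i β` is a multiple of `α_i`, so all coefficients of `β` off `i` vanish
  have hcd : ∀ j, (c j : ℝ) + d j = (Pi.single i (k : ℝ) : ι → ℝ) j :=
    Fintype.linearIndependent_iffₛ.1 R.sroot_indep _ _ <| by
      simp only [add_smul, Finset.sum_add_distrib, ← hc, ← hd, hk]
      rw [Fintype.sum_eq_single i fun j hj => by simp [hj], Pi.single_eq_same]
      abel
  have hβi : β = (c i : ℝ) • R.sroot i := by
    rw [hc, Fintype.sum_eq_single i fun j hj => ?_]
    have := hcd j
    rw [Pi.single_eq_of_ne hj] at this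
    have : (c j : ℝ) = 0 := by linarith [(c j).cast_nonneg (α := ℝ), (d j).cast_nonneg (α := ℝ)]
    rw [this, zero_smul]
  exact hne (R.eq_sroot_of_eq_natCast_smul hsl hβΔ hβi)

@[simp]
lemma wordProd_nil : R.wordProd [] = 1 := rfl

@[simp]
lemma wordProd_cons (i : ι) (l : List ι) :
    R.wordProd (i :: l) = R.simpleReflection i * R.wordProd l := by
  simp [wordProd]

lemma simpleReflection_mem_W (i : ι) : R.simpleReflection i ∈ R.W :=
  Subgroup.subset_closure ⟨i, rfl⟩

lemma wordProd_mem_W (l : List ι) : R.wordProd l ∈ R.W :=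
  Subgroup.list_prod_mem _ <| by simpa using fun i _ => R.simpleReflection_mem_W i

lemma simpleReflection_mul_self (i : ι) :
    R.simpleReflection i * R.simpleReflection i = 1 :=
  LinearEquiv.ext (R.reflect_reflect (R.sroot_mem i))

@[simp]
lemma simpleReflection_inv (i : ι) : (R.simpleReflection i)⁻¹ = R.simpleReflection i :=
  inv_eq_of_mul_eq_one_left (R.simpleReflection_mul_self i)

lemma exists_wordProd_eq {w : V ≃ₗ[ℝ] V} (hw : w ∈ R.W) : ∃ l, R.wordProd l = w := by
  induction hw using Subgroup.closure_induction_left with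
  | one => exact ⟨[], rfl⟩
  | mul_left _ hx _ _ ih =>
    obtain ⟨i, rfl⟩ := hx
    obtain ⟨l, rfl⟩ := ih
    exact ⟨i :: l, R.wordProd_cons i l⟩
  | inv_mul_cancel _ hx _ _ ih =>
    obtain ⟨i, rfl⟩ := hx
    obtain ⟨l, rfl⟩ := ih
    exact ⟨i :: l, by rw [wordProd_cons, ← simpleReflection_inv]; rfl⟩

lemma map_mem_Δ_of_mem_W {w : V ≃ₗ[ℝ] V} (hw : w ∈ R.W) {a : V} (ha : a ∈ R.Δ) :
    w a ∈ R.Δ := by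
  obtain ⟨l, rfl⟩ := R.exists_wordProd_eq hw
  clear hw
  induction l with
  | nil => exact ha
  | cons i l ih => exact R.reflect_root_mem _ (R.sroot_mem i) _ ih

lemma inner_map_map_of_mem_W {w : V ≃ₗ[ℝ] V} (hw : w ∈ R.W) (u v : V) :
    ⟪w u, w v⟫ = ⟪u, v⟫ := by
  obtain ⟨l, rfl⟩ := R.exists_wordProd_eq hw
  clear hw
  induction l with
  | nil => rfl
  | cons i l ih => exact (R.inner_reflect_reflect (R.sroot_mem i) _ _).trans ih

lemma reflect_map_eq_mul_mul_inv {w : V ≃ₗ[ℝ] V} (hw : w ∈ R.W) {a : V} (ha : a ∈ R.Δ) :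
    R.reflect (w a) = w * R.reflect a * w⁻¹ := by
  ext v
  have hv : w (w⁻¹ v) = v := w.apply_symm_apply v
  have hinner : ⟪a, w⁻¹ v⟫ = ⟪w a, v⟫ := by
    rw [← R.inner_map_map_of_mem_W hw, hv]
  simp only [LinearEquiv.mul_apply]
  rw [R.reflect_apply _ (R.map_mem_Δ_of_mem_W hw ha), R.reflect_apply a ha, map_sub, map_smul,
    hv, hinner, R.inner_map_map_of_mem_W hw]

lemma len_wordProd_le (l : List ι) : R.len (R.wordProd l) ≤ l.length :=
  Nat.sInf_le ⟨l, rfl, rfl⟩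

lemma exists_reduced_word {w : V ≃ₗ[ℝ] V} (hw : w ∈ R.W) :
    ∃ l, R.wordProd l = w ∧ l.length = R.len w := by
  obtain ⟨l, hl⟩ := R.exists_wordProd_eq hw
  obtain ⟨l', h1, h2⟩ := Nat.sInf_mem (⟨l.length, l, rfl, hl⟩ :
    {n | ∃ l : List ι, l.length = n ∧ (l.map fun i => R.reflect (R.sroot i)).prod = w}.Nonempty)
  exact ⟨l', h2, h1⟩

lemma len_mul_wordProd_le {w : V ≃ₗ[ℝ] V} (hw : w ∈ R.W) (t : List ι) :
    R.len (w * R.wordProd t) ≤ R.len w + t.length := by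
  obtain ⟨l, rfl, hl⟩ := R.exists_reduced_word hw
  calc R.len (R.wordProd l * R.wordProd t) = R.len (R.wordProd (l ++ t)) := by
        simp [wordProd]
    _ ≤ (l ++ t).length := R.len_wordProd_le _
    _ = R.len (R.wordProd l) + t.length := by rw [List.length_append, hl]

lemma mul_wordProd_cons (w : V ≃ₗ[ℝ] V) (j : ι) (r : List ι) :
    w * R.wordProd (j :: r) = w * R.simpleReflection j * R.wordProd r := by
  rw [wordProd_cons, mul_assoc]

lemma len_mul_simpleReflection_of_len_mul_cons {w : V ≃ₗ[ℝ] V} (hw : w ∈ R.W) {j : ι}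
    {r : List ι} (h : R.len (w * R.wordProd (j :: r)) = R.len w + (j :: r).length) :
    R.len (w * R.simpleReflection j) = R.len w + 1 ∧
      R.len (w * R.simpleReflection j * R.wordProd r) =
        R.len (w * R.simpleReflection j) + r.length := by
  have h₁ := R.len_mul_wordProd_le hw [j]
  have h₂ := R.len_mul_wordProd_le (mul_mem hw (R.simpleReflection_mem_W j)) r
  rw [mul_wordProd_cons] at h
  simp only [wordProd_cons, wordProd_nil, mul_one, List.length_cons, List.length_nil] at h h₁
  omega

section Exchange

variable {R}

/-- The exchange condition. -/
lemma exists_wordProd_eraseIdx_eq (hsl : R.SimplyLaced) (i : ι) :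
    ∀ l : List ι, -(R.wordProd l (R.sroot i)) ∈ R.pos →
      ∃ k, R.wordProd (l.eraseIdx k) = R.wordProd l * R.simpleReflection i
  | [], h => absurd (by simpa using h) (R.not_neg_mem_pos (R.sroot_mem_pos i))
  | j :: t, h => by
    rcases R.mem_pos_or_neg_mem_pos (R.map_mem_Δ_of_mem_W (R.wordProd_mem_W t) (R.sroot_mem i))
      with hpos | hneg
    · have hj : R.wordProd t (R.sroot i) = R.sroot j := by
        by_contra hne
        exact R.not_neg_mem_pos (R.simpleReflection_mem_pos hsl hpos hne) h
      have hconj := R.reflect_map_eq_mul_mul_inv (R.wordProd_mem_W t) (R.sroot_mem i)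
      rw [hj] at hconj
      refine ⟨0, ?_⟩
      simp only [List.eraseIdx_cons_zero, wordProd_cons, simpleReflection, hconj, mul_assoc,
        inv_mul_cancel_left]
      rw [← simpleReflection, R.simpleReflection_mul_self, mul_one]
    · obtain ⟨k, hk⟩ := exists_wordProd_eraseIdx_eq hsl i t hneg
      exact ⟨k + 1, by rw [List.eraseIdx_cons_succ, wordProd_cons, hk, wordProd_cons, mul_assoc]⟩

lemma map_sroot_mem_pos_of_len_lt (hsl : R.SimplyLaced) {w : V ≃ₗ[ℝ] V} (hw : w ∈ R.W) {i : ι}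
    (h : R.len w < R.len (w * R.simpleReflection i)) : w (R.sroot i) ∈ R.pos := by
  obtain ⟨l, rfl, hl⟩ := R.exists_reduced_word hw
  refine (R.mem_pos_or_neg_mem_pos (R.map_mem_Δ_of_mem_W hw (R.sroot_mem i))).resolve_right
    fun hneg => ?_
  obtain ⟨k, hk⟩ := exists_wordProd_eraseIdx_eq hsl i l hneg
  have := hk ▸ R.len_wordProd_le (l.eraseIdx k)
  have := l.length_eraseIdx_le k
  omega

end Exchange

section Inversions

/-- A commutative element in the sense of Fan–Stembridge, through its inversion set. -/
def IsCommutative (w : V ≃ₗ[ℝ] V) : Prop := ∀ γ ∈ R.N w, ∀ γ' ∈ R.N w, 0 ≤ ⟪γ, γ'⟫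

variable {R}

lemma simpleReflection_mem_N_mul (hsl : R.SimplyLaced) {w : V ≃ₗ[ℝ] V} {j : ι}
    (hα : w (R.sroot j) ∈ R.pos) {γ : V} (hγ : γ ∈ R.N w) :
    R.simpleReflection j γ ∈ R.N (w * R.simpleReflection j) := by
  have hne : γ ≠ R.sroot j := by
    rintro rfl
    exact R.not_neg_mem_pos hα hγ.2
  refine ⟨R.simpleReflection_mem_pos hsl hγ.1 hne, ?_⟩
  rw [LinearEquiv.mul_apply, simpleReflection, R.reflect_reflect (R.sroot_mem j)]
  exact hγ.2

lemma sroot_mem_N_mul {w : V ≃ₗ[ℝ] V} {j : ι} (hα : w (R.sroot j) ∈ R.pos) :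
    R.sroot j ∈ R.N (w * R.simpleReflection j) := by
  refine ⟨R.sroot_mem_pos j, ?_⟩
  rwa [LinearEquiv.mul_apply, simpleReflection, R.reflect_self (R.sroot_mem j), map_neg, neg_neg]

lemma inv_wordProd_mem_N_mul (hsl : R.SimplyLaced) (t : List ι) {w : V ≃ₗ[ℝ] V}
    (hw : w ∈ R.W) (h : R.len (w * R.wordProd t) = R.len w + t.length) {γ : V}
    (hγ : γ ∈ R.N w) : (R.wordProd t)⁻¹ γ ∈ R.N (w * R.wordProd t) := by
  induction t generalizing w γ with
  | nil => simpa using hγ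
  | cons j r ih =>
    obtain ⟨h₁, h₂⟩ := R.len_mul_simpleReflection_of_len_mul_cons hw h
    have hα := R.map_sroot_mem_pos_of_len_lt hsl hw (h₁ ▸ lt_add_one _)
    have := ih (mul_mem hw (R.simpleReflection_mem_W j)) h₂ (simpleReflection_mem_N_mul hsl hα hγ)
    rwa [mul_wordProd_cons, wordProd_cons, mul_inv_rev, simpleReflection_inv]

lemma IsCommutative.of_len_mul_eq (hsl : R.SimplyLaced) {w : V ≃ₗ[ℝ] V} (hw : w ∈ R.W)
    {t : List ι} (hc : R.IsCommutative (w * R.wordProd t))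
    (h : R.len (w * R.wordProd t) = R.len w + t.length) : R.IsCommutative w := by
  intro γ hγ γ' hγ'
  have := hc _ (inv_wordProd_mem_N_mul hsl t hw h hγ) _ (inv_wordProd_mem_N_mul hsl t hw h hγ')
  rwa [R.inner_map_map_of_mem_W (inv_mem (R.wordProd_mem_W t))] at this

end Inversions

section Order

protected lemma le.refl (γ : V) : R.le γ γ := ⟨0, by simp⟩

variable {R}

protected lemma le.trans {α β γ : V} (h₁ : R.le α β) (h₂ : R.le β γ) : R.le α γ := by
  obtain ⟨c, hc⟩ := h₁
  obtain ⟨d, hd⟩ := h₂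
  refine ⟨d + c, ?_⟩
  simp only [Pi.add_apply, Nat.cast_add, add_smul, Finset.sum_add_distrib, ← hc, ← hd]
  abel

lemma le_simpleReflection_of_inner_nonpos {β : V} (hβ : β ∈ R.Δ) {j : ι}
    (h : ⟪β, R.sroot j⟫ ≤ 0) : R.le β (R.simpleReflection j β) := by
  classical
  obtain ⟨k, hk, hk'⟩ := R.exists_int_reflect_eq (R.sroot_mem j) hβ
  have hk0 : k ≤ 0 := by
    have := R.inner_self_pos (R.sroot_mem j)
    have : (k : ℝ) ≤ 0 := by nlinarith [real_inner_comm β (R.sroot j)]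
    exact_mod_cast this
  have hcast : ((-k).toNat : ℝ) = -(k : ℝ) := by exact_mod_cast Int.toNat_of_nonneg (by omega)
  refine ⟨Pi.single j (-k).toNat, ?_⟩
  rw [R.sum_single_smul_sroot, simpleReflection, hk, hcast]
  module

end Order

lemma exists_le_mem_N_of_isCommutative_mul (hsl : R.SimplyLaced) (t : List ι)
    {w : V ≃ₗ[ℝ] V} (hw : w ∈ R.W) (hc : R.IsCommutative (w * R.wordProd t))
    (h : R.len (w * R.wordProd t) = R.len w + t.length) :
    ∀ γ' ∈ R.N w, ∃ γ ∈ R.N (w * R.wordProd t), R.le γ' γ := by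
  induction t generalizing w with
  | nil => exact fun γ' hγ' => ⟨γ', by simpa using hγ', le.refl R γ'⟩
  | cons j r ih =>
    intro γ' hγ'
    obtain ⟨h₁, h₂⟩ := R.len_mul_simpleReflection_of_len_mul_cons hw h
    rw [mul_wordProd_cons] at hc ⊢
    have hwj := mul_mem hw (R.simpleReflection_mem_W j)
    have hα := R.map_sroot_mem_pos_of_len_lt hsl hw (h₁ ▸ lt_add_one _)
    have hγ'j := simpleReflection_mem_N_mul hsl hα hγ'
    -- both `s_j γ'` and `α_j` are inversions of the commutative left factor `w s_j`
    have hinner : ⟪γ', R.sroot j⟫ ≤ 0 := by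
      have := hc.of_len_mul_eq hsl hwj h₂ _ hγ'j _ (sroot_mem_N_mul hα)
      rw [simpleReflection, R.inner_reflect_self (R.sroot_mem j)] at this
      linarith
    obtain ⟨γ, hγ, hle⟩ := ih hwj hc h₂ _ hγ'j
    exact ⟨γ, hγ, (le_simpleReflection_of_inner_nonpos hγ'.1.1 hinner).trans hle⟩

end RSD

theorem left_factor_inversion_set_below_general
    {ι V : Type*} [Fintype ι] [NormedAddCommGroup V] [InnerProductSpace ℝ V]
    (R : RSD ι V) (hsl : R.SimplyLaced) (w w' w'' : V ≃ₗ[ℝ] V)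
    (hw' : w' ∈ R.W) (hw'' : w'' ∈ R.W)
    (hcomm : ∀ γ ∈ R.N w, ∀ γ' ∈ R.N w, 0 ≤ ⟪γ, γ'⟫)
    (hfac : w = w' * w'') (hlen : R.len w = R.len w' + R.len w'') :
    ∀ γ' ∈ R.N w', ∃ γ ∈ R.N w, R.le γ' γ := by
  obtain ⟨t, rfl, ht⟩ := R.exists_reduced_word hw''
  subst hfac
  exact R.exists_le_mem_N_of_isCommutative_mul hsl t hw' hcomm (ht ▸ hlen)

/-- If `w` is commutative (all pairs of roots in `N(w)` have
nonnegative inner product) and `w'` is a left factor of `w`, then `N(w')` is located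
below `N(w)`: every `γ' ∈ N(w')` satisfies `γ' ≼ γ` for some `γ ∈ N(w)`. -/
theorem left_factor_inversion_set_below
    {ι V : Type*} [Fintype ι] [NormedAddCommGroup V] [InnerProductSpace ℝ V]
    (R : RSD ι V) (hsl : R.SimplyLaced) (w w' w'' : V ≃ₗ[ℝ] V)
    (hw : w ∈ R.W) (hw' : w' ∈ R.W) (hw'' : w'' ∈ R.W)
    (hcomm : ∀ γ ∈ R.N w, ∀ γ' ∈ R.N w, 0 ≤ ⟪γ, γ'⟫)
    (hfac : w = w' * w'') (hlen : R.len w = R.len w' + R.len w'') :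
    ∀ γ' ∈ R.N w', ∃ γ ∈ R.N w, R.le γ' γ :=
  left_factor_inversion_set_below_general R hsl w w' w'' hw' hw'' hcomm hfac hlen
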